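/- Let π_ρ(x,z) ∝ exp(-f(x) - g(z) - ‖x-z‖²/(2ρ²)) be a proper joint density on ℝ^N × ℝ^N with quadratic coupling, and assume f and g are continuous with exp(-f), exp(-g) integrable and bounded. Then for (X,Z) ~ π_ρ, the difference X - Z converges in probability to 0 as ρ → 0; i.e., for every ε > 0, P(‖X-Z‖ > ε) → 0 as ρ² → 0. -/

import Mathlib

/-!
Write `w_ρ(x, z) = exp(-f x - g z - ‖x - z‖² / (2ρ))`. On the event `ε < ‖x - z‖` the coupling
factor is at most `exp(-ε² / (2ρ))`, and `exp(-f x) exp(-g z)` is integrable, so the mass of the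
event is `O(exp(-ε² / (2ρ)))`. Conversely, on a product of two small balls the factor is at least
`exp(-(ε/2)² / (2ρ))` and `exp(-f - g)` is bounded below, so the total mass is at least
`c · exp(-(ε/2)² / (2ρ))` with `c > 0`. The ratio is therefore `O(exp(-3ε² / (8ρ)))`.
-/

open MeasureTheory Filter Topology

lemma tendsto_exp_neg_div_nhdsGT_zero {a : ℝ} (ha : 0 < a) :
    Tendsto (fun ρ : ℝ => Real.exp (-(a / ρ))) (𝓝[>] 0) (𝓝 0) :=
  Real.tendsto_exp_atBot.comp <| tendsto_neg_atTop_atBot.comp <|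
    (tendsto_inv_nhdsGT_zero.const_mul_atTop ha).congr fun ρ => (div_eq_mul_inv a ρ).symm

namespace QuadraticCoupling

variable {E : Type*} [NormedAddCommGroup E]

noncomputable def couplingWeight (f g : E → ℝ) (ρ : ℝ) (p : E × E) : ℝ :=
  Real.exp (-f p.1 - g p.2 - ‖p.1 - p.2‖ ^ 2 / (2 * ρ))

variable {f g : E → ℝ} {ρ : ℝ}

lemma couplingWeight_nonneg (p : E × E) : 0 ≤ couplingWeight f g ρ p :=
  (Real.exp_pos _).le

lemma couplingWeight_le_of_le_norm {ε : ℝ} (hε : 0 ≤ ε) (hρ : 0 ≤ ρ) {p : E × E}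
    (hp : ε ≤ ‖p.1 - p.2‖) :
    couplingWeight f g ρ p ≤
      Real.exp (-(ε ^ 2 / (2 * ρ))) * (Real.exp (-f p.1) * Real.exp (-g p.2)) := by
  rw [couplingWeight, ← Real.exp_add, ← Real.exp_add, Real.exp_le_exp]
  have : ε ^ 2 / (2 * ρ) ≤ ‖p.1 - p.2‖ ^ 2 / (2 * ρ) := by gcongr
  linarith

lemma couplingWeight_le (hρ : 0 ≤ ρ) (p : E × E) :
    couplingWeight f g ρ p ≤ Real.exp (-f p.1) * Real.exp (-g p.2) := by
  simpa using couplingWeight_le_of_le_norm le_rfl hρ (norm_nonneg (p.1 - p.2))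

lemma mul_exp_le_couplingWeight_of_norm_le {δ : ℝ} (hρ : 0 ≤ ρ) {p : E × E}
    (hp : ‖p.1 - p.2‖ ≤ δ) :
    Real.exp (-f p.1 - g p.2) * Real.exp (-(δ ^ 2 / (2 * ρ))) ≤ couplingWeight f g ρ p := by
  rw [couplingWeight, ← Real.exp_add, Real.exp_le_exp]
  have : ‖p.1 - p.2‖ ^ 2 / (2 * ρ) ≤ δ ^ 2 / (2 * ρ) := by gcongr
  linarith

lemma continuous_couplingWeight (hf : Continuous f) (hg : Continuous g) :
    Continuous (couplingWeight f g ρ) := by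
  unfold couplingWeight
  fun_prop

variable [MeasurableSpace E] [BorelSpace E] {μ ν : Measure E}

lemma integrable_couplingWeight [SecondCountableTopology E]
    (hf : Continuous f) (hg : Continuous g)
    (hfint : Integrable (fun x => Real.exp (-f x)) μ)
    (hgint : Integrable (fun z => Real.exp (-g z)) ν) (hρ : 0 ≤ ρ) :
    Integrable (couplingWeight f g ρ) (μ.prod ν) := by
  refine (hfint.mul_prod hgint).mono' (continuous_couplingWeight hf hg).aestronglyMeasurable
    (ae_of_all _ fun p => ?_)
  rw [Real.norm_of_nonneg (couplingWeight_nonneg p)]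
  exact couplingWeight_le hρ p

variable [SFinite ν]

lemma setIntegral_couplingWeight_le [SecondCountableTopology E] [SFinite μ]
    (hf : Continuous f) (hg : Continuous g)
    (hfint : Integrable (fun x => Real.exp (-f x)) μ)
    (hgint : Integrable (fun z => Real.exp (-g z)) ν) {ε : ℝ} (hε : 0 ≤ ε) (hρ : 0 ≤ ρ) :
    ∫ p in {q : E × E | ε < ‖q.1 - q.2‖}, couplingWeight f g ρ p ∂(μ.prod ν) ≤
      Real.exp (-(ε ^ 2 / (2 * ρ))) *
        ((∫ x, Real.exp (-f x) ∂μ) * ∫ z, Real.exp (-g z) ∂ν) := by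
  have hbound := (hfint.mul_prod hgint).const_mul (Real.exp (-(ε ^ 2 / (2 * ρ))))
  have hT : MeasurableSet {q : E × E | ε < ‖q.1 - q.2‖} :=
    (isOpen_lt continuous_const (continuous_fst.sub continuous_snd).norm).measurableSet
  calc ∫ p in {q : E × E | ε < ‖q.1 - q.2‖}, couplingWeight f g ρ p ∂(μ.prod ν)
      ≤ ∫ p in {q : E × E | ε < ‖q.1 - q.2‖},
          Real.exp (-(ε ^ 2 / (2 * ρ))) * (Real.exp (-f p.1) * Real.exp (-g p.2)) ∂(μ.prod ν) :=
        setIntegral_mono_on (integrable_couplingWeight hf hg hfint hgint hρ).integrableOn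
          hbound.integrableOn hT fun p hp => couplingWeight_le_of_le_norm hε hρ hp.le
    _ ≤ ∫ p, Real.exp (-(ε ^ 2 / (2 * ρ))) * (Real.exp (-f p.1) * Real.exp (-g p.2))
          ∂(μ.prod ν) :=
        setIntegral_le_integral hbound (ae_of_all _ fun _ => by positivity)
    _ = _ := by rw [integral_const_mul,
          integral_prod_mul (fun x => Real.exp (-f x)) (fun z => Real.exp (-g z))]

variable [ProperSpace E] [μ.IsOpenPosMeasure] [ν.IsOpenPosMeasure]
  [IsFiniteMeasureOnCompacts μ] [IsFiniteMeasureOnCompacts ν]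

lemma exists_pos_mul_exp_le_integral_couplingWeight (hf : Continuous f) (hg : Continuous g)
    (hfint : Integrable (fun x => Real.exp (-f x)) μ)
    (hgint : Integrable (fun z => Real.exp (-g z)) ν) {δ : ℝ} (hδ : 0 < δ) :
    ∃ c > 0, ∀ ρ, 0 ≤ ρ →
      c * Real.exp (-(δ ^ 2 / (2 * ρ))) ≤ ∫ p, couplingWeight f g ρ p ∂(μ.prod ν) := by
  set K : Set E := Metric.closedBall 0 (δ / 2)
  have hK : IsCompact (K ×ˢ K) := (isCompact_closedBall 0 _).prod (isCompact_closedBall 0 _)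
  have hK_pos : 0 < μ.prod ν (K ×ˢ K) := by
    rw [Measure.prod_prod]
    exact ENNReal.mul_pos (Metric.measure_closedBall_pos μ 0 (by positivity)).ne'
      (Metric.measure_closedBall_pos ν 0 (by positivity)).ne'
  have hK_diam : ∀ p ∈ K ×ˢ K, ‖p.1 - p.2‖ ≤ δ := fun p hp => by
    have h₁ : ‖p.1‖ ≤ δ / 2 := mem_closedBall_zero_iff.1 hp.1
    have h₂ : ‖p.2‖ ≤ δ / 2 := mem_closedBall_zero_iff.1 hp.2
    linarith [norm_sub_le p.1 p.2]
  obtain ⟨p₀, -, hmin⟩ := hK.exists_isMinOn ⟨(0, 0), by simp [K]; positivity⟩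
    (by fun_prop : Continuous fun p : E × E => Real.exp (-f p.1 - g p.2)).continuousOn
  refine ⟨Real.exp (-f p₀.1 - g p₀.2) * (μ.prod ν).real (K ×ˢ K),
    mul_pos (Real.exp_pos _) (ENNReal.toReal_pos hK_pos.ne' hK.measure_lt_top.ne),
    fun ρ hρ => ?_⟩
  have hw := integrable_couplingWeight hf hg hfint hgint hρ
  calc Real.exp (-f p₀.1 - g p₀.2) * (μ.prod ν).real (K ×ˢ K) * Real.exp (-(δ ^ 2 / (2 * ρ)))
      = Real.exp (-f p₀.1 - g p₀.2) * Real.exp (-(δ ^ 2 / (2 * ρ))) *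
          (μ.prod ν).real (K ×ˢ K) := by ring
    _ ≤ ∫ p in K ×ˢ K, couplingWeight f g ρ p ∂(μ.prod ν) :=
        setIntegral_ge_of_const_le_real hK.measurableSet hK.measure_lt_top.ne
          (fun p hp => (mul_le_mul_of_nonneg_right (hmin hp) (Real.exp_pos _).le).trans
            (mul_exp_le_couplingWeight_of_norm_le hρ (hK_diam p hp))) hw.integrableOn
    _ ≤ ∫ p, couplingWeight f g ρ p ∂(μ.prod ν) :=
        setIntegral_le_integral hw (ae_of_all _ couplingWeight_nonneg)

theorem tendsto_setIntegral_couplingWeight_div_integral [SFinite μ]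
    (hf : Continuous f) (hg : Continuous g)
    (hfint : Integrable (fun x => Real.exp (-f x)) μ)
    (hgint : Integrable (fun z => Real.exp (-g z)) ν) {ε : ℝ} (hε : 0 < ε) :
    Tendsto (fun ρ => (∫ p in {q : E × E | ε < ‖q.1 - q.2‖}, couplingWeight f g ρ p ∂(μ.prod ν)) /
        ∫ p, couplingWeight f g ρ p ∂(μ.prod ν)) (𝓝[>] 0) (𝓝 0) := by
  obtain ⟨c, hc, hmass⟩ :=
    exists_pos_mul_exp_le_integral_couplingWeight hf hg hfint hgint (half_pos hε)
  set C := (∫ x, Real.exp (-f x) ∂μ) * ∫ z, Real.exp (-g z) ∂ν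
  have hC : 0 ≤ C := mul_nonneg (integral_nonneg fun _ => (Real.exp_pos _).le)
    (integral_nonneg fun _ => (Real.exp_pos _).le)
  refine squeeze_zero' (g := fun ρ => C / c * Real.exp (-(3 * ε ^ 2 / 8 / ρ)))
    (Eventually.of_forall fun ρ => div_nonneg (integral_nonneg couplingWeight_nonneg)
      (integral_nonneg couplingWeight_nonneg)) ?_ ?_
  · filter_upwards [self_mem_nhdsWithin] with ρ (hρ : 0 < ρ)
    calc _ ≤ Real.exp (-(ε ^ 2 / (2 * ρ))) * C / (c * Real.exp (-((ε / 2) ^ 2 / (2 * ρ)))) :=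
          div_le_div₀ (by positivity) (setIntegral_couplingWeight_le hf hg hfint hgint hε.le hρ.le)
            (by positivity) (hmass ρ hρ.le)
      _ = C / c * Real.exp (-(3 * ε ^ 2 / 8 / ρ)) := by
          rw [show -(3 * ε ^ 2 / 8 / ρ) = -(ε ^ 2 / (2 * ρ)) - -((ε / 2) ^ 2 / (2 * ρ)) by ring,
            Real.exp_sub]
          ring
  · simpa using
      (tendsto_exp_neg_div_nhdsGT_zero (by positivity : 0 < 3 * ε ^ 2 / 8)).const_mul (C / c)

end QuadraticCoupling

theorem stmt13_general (N : ℕ) (f g : EuclideanSpace ℝ (Fin N) → ℝ)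
    (hf : Continuous f) (hg : Continuous g)
    (hfint : Integrable fun x => Real.exp (-f x))
    (hgint : Integrable fun x => Real.exp (-g x))
    (w : ℝ → EuclideanSpace ℝ (Fin N) × EuclideanSpace ℝ (Fin N) → ℝ)
    (hw : ∀ ρ p, w ρ p = Real.exp (-f p.1 - g p.2 - ‖p.1 - p.2‖ ^ 2 / (2 * ρ))) :
    ∀ ε > (0:ℝ),
      Tendsto
        (fun ρ : ℝ =>
          (∫ p in {q : EuclideanSpace ℝ (Fin N) × EuclideanSpace ℝ (Fin N) |
              ε < ‖q.1 - q.2‖}, w ρ p) / ∫ p, w ρ p)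
        (nhdsWithin 0 (Set.Ioi 0)) (nhds 0) := by
  intro ε hε
  obtain rfl : w = QuadraticCoupling.couplingWeight f g := funext fun ρ => funext (hw ρ)
  exact QuadraticCoupling.tendsto_setIntegral_couplingWeight_div_integral hf hg hfint hgint hε

/-- Under the split distribution `π_ρ` with quadratic coupling, `X - Z → 0` in
probability as `ρ² → 0`. -/
theorem stmt13 (N : ℕ) (f g : EuclideanSpace ℝ (Fin N) → ℝ)
    (hf : Continuous f) (hg : Continuous g)
    (hfint : Integrable fun x => Real.exp (-f x))
    (hgint : Integrable fun x => Real.exp (-g x))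
    (hfb : ∃ B, ∀ x, Real.exp (-f x) ≤ B) (hgb : ∃ B, ∀ x, Real.exp (-g x) ≤ B)
    (hfg : Integrable fun x => Real.exp (-f x - g x))
    (hpos : 0 < ∫ x, Real.exp (-f x - g x))
    (w : ℝ → EuclideanSpace ℝ (Fin N) × EuclideanSpace ℝ (Fin N) → ℝ)
    (hw : ∀ ρ p, w ρ p = Real.exp (-f p.1 - g p.2 - ‖p.1 - p.2‖ ^ 2 / (2 * ρ))) :
    ∀ ε > (0:ℝ),
      Tendsto
        (fun ρ : ℝ =>
          (∫ p in {q : EuclideanSpace ℝ (Fin N) × EuclideanSpace ℝ (Fin N) |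
              ε < ‖q.1 - q.2‖}, w ρ p) / ∫ p, w ρ p)
        (nhdsWithin 0 (Set.Ioi 0)) (nhds 0) :=
  stmt13_general N f g hf hg hfint hgint w hw
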